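/- arXiv:1105.1616 — 3 statements merged into one kernel-verified Lean document; each statement's English description precedes it below -/
import Mathlib

section
/- Let α be real, and suppose |qα − a| < 1/q for coprime integers a, q with q ≥ 1. Let D be a positive integer with D² > q/4, and let z ∈ (0, 1/2]. Denote by W(D, z) the number of integers d with 1 ≤ d ≤ D and ‖d²α‖ ≤ z. Then for every ε > 0, W(D, z) ≪_ε D²/q + D^{1+ε} z^{1/2}. -/
/-! Write `b = qα - a`. For `m = qj + s` with `0 ≤ s < q`, the integer `m a - q round(mα)`
lies within `q‖mα‖ + 1` of `-qjb`, and it determines `m a mod q`, hence `m` inside its block,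
since `gcd(a, q) = 1`. So every block of `q` consecutive integers contains at most `2qδ + 3`
integers `m` with `‖mα‖ ≤ δ`. Applied to the squares `d²`, this gives
`W ≤ (D²/q + 1)(2qz + 3)`, which suffices when `D²z ≤ 1`. Otherwise count pairs `d₂ < d₁`:
`n = d₁² - d₂² ≤ D²` has `‖nα‖ ≤ 2z` and factors as `(d₁ - d₂)(d₁ + d₂)`, so the divisor bound
`τ(n) ≪ D^ε` gives `W² ≤ W + O(D^ε (D²/q + 1)(qz + 1))`. Since `D²/q > 1/4`, both estimates
give the claim. -/

/-- distance to the nearest integer -/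
noncomputable def nid (x : ℝ) : ℝ := |x - round x|

open Finset

lemma nid_sub_le (x y : ℝ) : nid (x - y) ≤ nid x + nid y :=
  calc nid (x - y) ≤ |x - y - ↑(round x - round y)| := round_le _ _
    _ = |(x - round x) - (y - round y)| := by push_cast; ring_nf
    _ ≤ nid x + nid y := abs_sub _ _

lemma Int.card_le_two_mul_add_one_of_abs_sub_le {s : Finset ℤ} {c r : ℝ} (hr : 0 ≤ r)
    (h : ∀ k ∈ s, |(k : ℝ) - c| ≤ r) : (#s : ℝ) ≤ 2 * r + 1 := by
  have hsub : s ⊆ Icc ⌈c - r⌉ ⌊c + r⌋ := fun k hk => by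
    have := abs_le.1 (h k hk)
    exact mem_Icc.2 ⟨Int.ceil_le.2 (by linarith), Int.le_floor.2 (by linarith)⟩
  have hIcc : ((#(Icc ⌈c - r⌉ ⌊c + r⌋) : ℤ) : ℝ) ≤ 2 * r + 1 := by
    rw [Int.card_Icc, Int.toNat_eq_max]
    push_cast
    have := Int.le_ceil (c - r)
    have := Int.floor_le (c + r)
    exact max_le (by linarith) (by linarith)
  exact_mod_cast (Nat.cast_le.2 (card_le_card hsub)).trans (by exact_mod_cast hIcc)

noncomputable def nearIntegerMultiples (α : ℝ) (N : ℕ) (δ : ℝ) : Finset ℕ :=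
  {n ∈ Icc 1 N | nid (n * α) ≤ δ}

section Dirichlet

variable {α : ℝ} {a : ℤ} {q : ℕ}

/-- A lift of `m a mod q` to `ℤ`, chosen so that it stays close to `-q ⌊m / q⌋ (q α - a)`. -/
noncomputable def residue (α : ℝ) (a : ℤ) (q m : ℕ) : ℤ := m * a - q * round (m * α)

lemma residue_injOn_div_eq (hcop : Int.gcd a q = 1) (j : ℕ) :
    Set.InjOn (residue α a q) {m | m / q = j} := by
  intro m hm m' hm' heq
  have hdvd : (q : ℤ) ∣ (m - m' : ℤ) * a :=
    ⟨round (m * α) - round (m' * α), by simp only [residue] at heq; linear_combination heq⟩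
  have hq : (q : ℤ) ∣ m - m' :=
    Int.dvd_of_dvd_mul_left_of_gcd_one hdvd (by simpa [Int.gcd_comm] using hcop)
  have hmod : m' % q = m % q := Nat.modEq_iff_dvd.2 (by simpa using hq)
  rw [← Nat.div_add_mod m q, ← Nat.div_add_mod m' q, hm, hm', hmod]

lemma abs_residue_add_le {m : ℕ} {δ : ℝ} (hq : 0 < q) (hb : |q * α - a| ≤ 1 / q)
    (hm : nid (m * α) ≤ δ) :
    |(residue α a q m : ℝ) + q * (m / q : ℕ) * (q * α - a)| ≤ q * δ + 1 := by
  have hsplit : (m : ℝ) = q * (m / q : ℕ) + (m % q : ℕ) := by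
    exact_mod_cast (Nat.div_add_mod m q).symm
  have hrem : ((m % q : ℕ) : ℝ) * |q * α - a| ≤ 1 :=
    calc ((m % q : ℕ) : ℝ) * |q * α - a| ≤ q * (1 / q) := by
          gcongr
          exact_mod_cast (Nat.mod_lt m hq).le
      _ ≤ 1 := by rw [mul_one_div]; exact div_self_le_one _
  have hres : (residue α a q m : ℝ) + q * (m / q : ℕ) * (q * α - a)
      = q * (m * α - round (m * α)) - (m % q : ℕ) * (q * α - a) := by
    unfold residue; push_cast; linear_combination (a - q * α) * hsplit
  calc |(residue α a q m : ℝ) + q * (m / q : ℕ) * (q * α - a)|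
      ≤ |(q : ℝ)| * nid (m * α) + |((m % q : ℕ) : ℝ)| * |q * α - a| := by
        rw [hres, nid, ← abs_mul, ← abs_mul]; exact abs_sub _ _
    _ ≤ q * δ + 1 := by simp only [Nat.abs_cast]; gcongr

lemma card_filter_div_eq_le {δ : ℝ} (hq : 0 < q) (hcop : Int.gcd a q = 1)
    (hb : |q * α - a| ≤ 1 / q) (hδ : 0 ≤ δ) {T : Finset ℕ} (hT : ∀ m ∈ T, nid (m * α) ≤ δ)
    (j : ℕ) : (#{m ∈ T | m / q = j} : ℝ) ≤ 2 * q * δ + 3 := by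
  have hinj : Set.InjOn (residue α a q) ({m ∈ T | m / q = j} : Finset ℕ) :=
    (residue_injOn_div_eq hcop j).mono fun m hm => (mem_filter.1 hm).2
  rw [← card_image_of_injOn hinj]
  calc (#({m ∈ T | m / q = j}.image (residue α a q)) : ℝ) ≤ 2 * (q * δ + 1) + 1 := by
        refine Int.card_le_two_mul_add_one_of_abs_sub_le (c := -(q * j * (q * α - a)))
          (by positivity) fun k hk => ?_
        obtain ⟨m, hm, rfl⟩ := mem_image.1 hk
        obtain ⟨hmT, rfl⟩ := mem_filter.1 hm
        simpa using abs_residue_add_le hq hb (hT m hmT)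
    _ = 2 * q * δ + 3 := by ring

lemma card_nearIntegerMultiples_le {δ : ℝ} (hq : 0 < q) (hcop : Int.gcd a q = 1)
    (hb : |q * α - a| ≤ 1 / q) (hδ : 0 ≤ δ) (N : ℕ) :
    (#(nearIntegerMultiples α N δ) : ℝ) ≤ (N / q + 1) * (2 * q * δ + 3) := by
  set T := nearIntegerMultiples α N δ
  have hT : ∀ m ∈ T, m ≤ N ∧ nid (m * α) ≤ δ := fun m hm => by
    simp only [T, nearIntegerMultiples, mem_filter, mem_Icc] at hm
    exact ⟨hm.1.2, hm.2⟩
  have hblocks : #T = ∑ j ∈ range (N / q + 1), #{m ∈ T | m / q = j} :=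
    card_eq_sum_card_fiberwise fun m hm =>
      mem_range.2 (Nat.lt_succ_of_le (Nat.div_le_div_right (hT m hm).1))
  calc (#T : ℝ) = ∑ j ∈ range (N / q + 1), (#{m ∈ T | m / q = j} : ℝ) := by
        rw [hblocks]; push_cast; rfl
    _ ≤ ∑ _j ∈ range (N / q + 1), (2 * q * δ + 3) :=
        sum_le_sum fun j _ => card_filter_div_eq_le hq hcop hb hδ (fun m hm => (hT m hm).2) j
    _ ≤ (N / q + 1) * (2 * q * δ + 3) := by
        rw [sum_const, card_range, nsmul_eq_mul]
        gcongr
        push_cast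
        gcongr
        exact Nat.cast_div_le

end Dirichlet

noncomputable def nearIntegerSquares (α : ℝ) (D : ℕ) (z : ℝ) : Finset ℕ :=
  {d ∈ Icc 1 D | nid (d ^ 2 * α) ≤ z}

lemma card_nearIntegerSquares_le (α : ℝ) (D : ℕ) (z : ℝ) :
    #(nearIntegerSquares α D z) ≤ #(nearIntegerMultiples α (D ^ 2) z) := by
  refine card_le_card_of_injOn (· ^ 2) (fun d hd => ?_)
    fun d _ d' _ h => Nat.pow_left_injective two_ne_zero h
  simp only [nearIntegerSquares, nearIntegerMultiples, mem_Icc, coe_filter] at hd ⊢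
  exact ⟨⟨Nat.one_le_pow _ _ hd.1.1, Nat.pow_le_pow_left hd.1.2 2⟩, by push_cast; exact hd.2⟩

lemma sq_sub_sq_mem_nearIntegerMultiples {α z : ℝ} {D d₁ d₂ : ℕ}
    (h₁ : d₁ ∈ nearIntegerSquares α D z) (h₂ : d₂ ∈ nearIntegerSquares α D z) (h : d₂ < d₁) :
    d₁ ^ 2 - d₂ ^ 2 ∈ nearIntegerMultiples α (D ^ 2) (2 * z) := by
  simp only [nearIntegerSquares, nearIntegerMultiples, mem_filter, mem_Icc] at h₁ h₂ ⊢
  have hlt : d₂ ^ 2 < d₁ ^ 2 := Nat.pow_lt_pow_left h two_ne_zero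
  refine ⟨⟨Nat.sub_pos_of_lt hlt, (Nat.sub_le _ _).trans (Nat.pow_le_pow_left h₁.1.2 2)⟩, ?_⟩
  calc nid (((d₁ ^ 2 - d₂ ^ 2 : ℕ) : ℝ) * α) = nid (d₁ ^ 2 * α - d₂ ^ 2 * α) := by
        rw [Nat.cast_sub hlt.le]; push_cast; ring_nf
    _ ≤ 2 * z := by linarith [nid_sub_le (d₁ ^ 2 * α) (d₂ ^ 2 * α)]

lemma card_mul_self_le_card_add_two_mul_card_lt {ι : Type*} [LinearOrder ι] (S : Finset ι) :
    #S * #S ≤ #S + 2 * #{p ∈ S ×ˢ S | p.2 < p.1} := by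
  set L := {p ∈ S ×ˢ S | p.2 < p.1}
  have hcover : S ×ˢ S ⊆ S.diag ∪ (L ∪ L.image Prod.swap) := by
    rintro ⟨x, y⟩ hxy
    rcases lt_trichotomy x y with h | rfl | h
    · simp_all [L]
    · simp_all
    · simp_all [L]
  calc #S * #S = #(S ×ˢ S) := (card_product S S).symm
    _ ≤ #S.diag + (#L + #(L.image Prod.swap)) :=
        (card_le_card hcover).trans <|
          (card_union_le _ _).trans (by gcongr; exact card_union_le _ _)
    _ ≤ #S + 2 * #L := by rw [diag_card]; linarith [card_image_le (s := L) (f := Prod.swap)]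

lemma card_lt_pairs_le_sum_card_divisors {S M : Finset ℕ}
    (hM : ∀ d₁ ∈ S, ∀ d₂ ∈ S, d₂ < d₁ → d₁ ^ 2 - d₂ ^ 2 ∈ M) :
    #{p ∈ S ×ˢ S | p.2 < p.1} ≤ ∑ n ∈ M, #n.divisors := by
  have hmaps : ∀ p ∈ {p ∈ S ×ˢ S | p.2 < p.1},
      (p.1 - p.2, p.1 + p.2) ∈ M.biUnion Nat.divisorsAntidiagonal := by
    intro p hp
    simp only [mem_filter, mem_product] at hp
    refine mem_biUnion.2
      ⟨_, hM _ hp.1.1 _ hp.1.2 hp.2, Nat.mem_divisorsAntidiagonal.2 ⟨?_, ?_⟩⟩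
    · rw [Nat.sq_sub_sq, mul_comm]
    · exact Nat.sub_ne_zero_of_lt (Nat.pow_lt_pow_left hp.2 two_ne_zero)
  calc #{p ∈ S ×ˢ S | p.2 < p.1} ≤ #(M.biUnion Nat.divisorsAntidiagonal) :=
        card_le_card_of_injOn _ hmaps fun p hp p' hp' h => by
          simp only [coe_filter, Set.mem_ofPred_eq, Prod.mk.injEq] at hp hp' h
          exact Prod.ext (by omega) (by omega)
    _ ≤ ∑ n ∈ M, #n.divisorsAntidiagonal := card_biUnion_le
    _ = ∑ n ∈ M, #n.divisors := by simp only [← Nat.map_div_right_divisors, card_map]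

lemma natCast_add_one_le_max_one_inv_mul_pow {c y : ℝ} (hc : 0 < c) (hy : 1 + c ≤ y) (e : ℕ) :
    (e + 1 : ℝ) ≤ max 1 c⁻¹ * y ^ e :=
  calc (e + 1 : ℝ) ≤ max 1 c⁻¹ * (1 + e * c) := by
        have h1 : 1 ≤ max 1 c⁻¹ := le_max_left _ _
        have h2 : 1 ≤ max 1 c⁻¹ * c := by
          simpa [hc.ne'] using mul_le_mul_of_nonneg_right (le_max_right 1 c⁻¹) hc.le
        nlinarith [(e.cast_nonneg : (0 : ℝ) ≤ e)]
    _ ≤ max 1 c⁻¹ * (1 + c) ^ e := by gcongr; exact one_add_mul_le_pow (by linarith) e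
    _ ≤ max 1 c⁻¹ * y ^ e := by gcongr

theorem exists_card_divisors_le_mul_rpow {ε : ℝ} (hε : 0 < ε) :
    ∃ C : ℝ, 1 ≤ C ∧ ∀ n : ℕ, n ≠ 0 → (#n.divisors : ℝ) ≤ C * (n : ℝ) ^ ε := by
  set K : ℝ := max 1 (2 ^ ε - 1)⁻¹
  -- primes `p ≥ B` have `p ^ ε ≥ 2`, so only the `p < B` contribute a factor `K`
  set B := ⌈(2 : ℝ) ^ ε⁻¹⌉₊
  have hK : 1 ≤ K := le_max_left _ _
  refine ⟨K ^ B, one_le_pow₀ hK, fun n hn => ?_⟩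
  have hprime : ∀ p ∈ n.primeFactors, (n.factorization p + 1 : ℝ)
      ≤ (if p < B then K else 1) * ((p : ℝ) ^ n.factorization p) ^ ε := by
    intro p hp
    have hp2 : (2 : ℝ) ≤ p := by exact_mod_cast (Nat.prime_of_mem_primeFactors hp).two_le
    rw [← Real.rpow_pow_comm (by positivity)]
    split_ifs with hpB
    · have h2 : (1 : ℝ) < 2 ^ ε := Real.one_lt_rpow (by norm_num) hε
      refine natCast_add_one_le_max_one_inv_mul_pow (by linarith) ?_ _
      linarith [Real.rpow_le_rpow (by norm_num) hp2 hε.le]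
    · have h2 : (2 : ℝ) ≤ (p : ℝ) ^ ε := by
        calc (2 : ℝ) = ((2 : ℝ) ^ ε⁻¹) ^ ε := by
              rw [← Real.rpow_mul (by norm_num), inv_mul_cancel₀ hε.ne', Real.rpow_one]
          _ ≤ (p : ℝ) ^ ε := by
            gcongr
            exact (Nat.le_ceil _).trans (by exact_mod_cast not_lt.1 hpB)
      simpa using natCast_add_one_le_max_one_inv_mul_pow one_pos (by linarith) (n.factorization p)
  have hweights : ∏ p ∈ n.primeFactors, (if p < B then K else 1) ≤ K ^ B := by
    rw [prod_ite, prod_const_one, mul_one, prod_const]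
    refine pow_le_pow_right₀ hK ((card_le_card fun p hp => ?_).trans (card_range B).le)
    exact mem_range.2 (mem_filter.1 hp).2
  calc (#n.divisors : ℝ) = ∏ p ∈ n.primeFactors, (n.factorization p + 1 : ℝ) := by
        rw [Nat.card_divisors hn]; push_cast; rfl
    _ ≤ ∏ p ∈ n.primeFactors, (if p < B then K else 1) * ((p : ℝ) ^ n.factorization p) ^ ε :=
        prod_le_prod (fun _ _ => by positivity) hprime
    _ = (∏ p ∈ n.primeFactors, if p < B then K else 1) * (n : ℝ) ^ ε := by
        rw [prod_mul_distrib, Real.finsetProd_rpow _ _ (fun _ _ => by positivity)]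
        congr 2
        exact_mod_cast Nat.prod_factorization_pow_eq_self hn
    _ ≤ K ^ B * (n : ℝ) ^ ε := by gcongr

lemma card_nearIntegerSquares_mul_self_le {α z C ε : ℝ} (hε : 0 ≤ ε)
    (hC : ∀ n : ℕ, n ≠ 0 → (#n.divisors : ℝ) ≤ C * (n : ℝ) ^ (ε / 2)) (D : ℕ) :
    (#(nearIntegerSquares α D z) : ℝ) * #(nearIntegerSquares α D z)
      ≤ #(nearIntegerSquares α D z)
        + 2 * (C * (D : ℝ) ^ ε) * #(nearIntegerMultiples α (D ^ 2) (2 * z)) := by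
  set S := nearIntegerSquares α D z
  set M := nearIntegerMultiples α (D ^ 2) (2 * z)
  have hpairs : #S * #S ≤ #S + 2 * ∑ n ∈ M, #n.divisors :=
    (card_mul_self_le_card_add_two_mul_card_lt S).trans <| by
      gcongr
      exact card_lt_pairs_le_sum_card_divisors fun d₁ h₁ d₂ h₂ h =>
        sq_sub_sq_mem_nearIntegerMultiples h₁ h₂ h
  have hC1 : 1 ≤ C := by simpa using hC 1 one_ne_zero
  have hdiv : ∑ n ∈ M, (#n.divisors : ℝ) ≤ #M * (C * (D : ℝ) ^ ε) := by
    rw [mul_comm, ← nsmul_eq_mul', ← sum_const]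
    refine sum_le_sum fun n hn => ?_
    simp only [M, nearIntegerMultiples, mem_filter, mem_Icc] at hn
    calc (#n.divisors : ℝ) ≤ C * (n : ℝ) ^ (ε / 2) := hC n (by omega)
      _ ≤ C * ((D : ℝ) ^ 2) ^ (ε / 2) := by
          gcongr; exact_mod_cast hn.1.2
      _ = C * (D : ℝ) ^ ε := by rw [← Real.rpow_natCast_mul (by positivity)]; push_cast; ring_nf
  calc (#S : ℝ) * #S ≤ #S + 2 * ∑ n ∈ M, (#n.divisors : ℝ) := by exact_mod_cast hpairs
    _ ≤ _ := by linarith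

lemma le_one_add_of_mul_self_le_add_sq {W B : ℝ} (hB : 0 ≤ B) (h : W * W ≤ W + B ^ 2) :
    W ≤ 1 + B := by
  nlinarith

lemma le_of_linear_and_quadratic_bounds {W C E D q z : ℝ} (hq : 0 < q) (hD : 0 ≤ D)
    (hqD : q / 4 < D ^ 2) (hz : 0 ≤ z) (hC : 1 ≤ C) (hE : 1 ≤ E)
    (hlin : W ≤ (D ^ 2 / q + 1) * (2 * q * z + 3))
    (hquad : W * W ≤ W + 2 * (C * E) * ((D ^ 2 / q + 1) * (4 * q * z + 3))) :
    W ≤ (7 * C + 15) * (D ^ 2 / q + D * E * √z) := by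
  set t := D ^ 2 / q
  set x := D * √z
  have ht : 1 ≤ 4 * t := by rw [← mul_div_assoc, le_div_iff₀ hq]; linarith
  have hx : 0 ≤ x := by positivity
  have hxt : x ^ 2 = t * q * z := by
    rw [mul_pow, Real.sq_sqrt hz, div_mul_cancel₀ _ hq.ne']
  have hqz : 0 ≤ q * z := by positivity
  -- `t + 1 ≤ 5 t` and `t q z = x ^ 2`
  have hlin' : W ≤ 10 * x ^ 2 + 15 * t := by nlinarith
  have hquad' : W * W ≤ W + 2 * (C * E) * (20 * x ^ 2 + 15 * t) := by
    refine hquad.trans ?_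
    have : 0 ≤ 2 * (C * E) := by positivity
    gcongr
    nlinarith
  have hY : 0 ≤ t + E * x := by positivity
  rw [show D * E * √z = E * x by ring]
  rcases le_or_gt x 1 with hx1 | hx1
  · have hx2 : x ^ 2 ≤ E * x := by nlinarith
    nlinarith
  · have hEx : C * E * x ^ 2 ≤ C * (E * x) ^ 2 := by
      have : 0 ≤ C * x ^ 2 * (E * (E - 1)) := by have := sub_nonneg.2 hE; positivity
      linarith
    have hEt : C * E * t ≤ C * (E * x) * t := by
      have : 0 ≤ C * E * t * (x - 1) := by have := sub_nonneg.2 hx1.le; positivity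
      linarith
    have hB : 2 * (C * E) * (20 * x ^ 2 + 15 * t) ≤ (7 * C * (t + E * x)) ^ 2 :=
      calc 2 * (C * E) * (20 * x ^ 2 + 15 * t)
            ≤ 40 * C * (E * x) ^ 2 + 30 * C * (E * x) * t := by linarith
        _ ≤ 40 * C * (t + E * x) ^ 2 := by
            have : 0 ≤ C * t ^ 2 + C * (E * x) * t := by positivity
            nlinarith
        _ ≤ 49 * C ^ 2 * (t + E * x) ^ 2 := by gcongr <;> nlinarith
        _ = (7 * C * (t + E * x)) ^ 2 := by ring
    have := le_one_add_of_mul_self_le_add_sq (B := 7 * C * (t + E * x)) (by positivity)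
      (hquad'.trans (by linarith))
    nlinarith

theorem stmt3 (ε : ℝ) (hε : 0 < ε) :
    ∃ C : ℝ, 0 < C ∧ ∀ (α : ℝ) (a : ℤ) (q D : ℕ) (z : ℝ),
      1 ≤ q → Int.gcd a q = 1 → |(q : ℝ) * α - a| < 1 / q →
      1 ≤ D → (q : ℝ) / 4 < (D : ℝ) ^ 2 → 0 < z → z ≤ 1 / 2 →
      (((Finset.Icc 1 D).filter (fun d : ℕ => nid ((d : ℝ) ^ 2 * α) ≤ z)).card : ℝ)
        ≤ C * ((D : ℝ) ^ 2 / q + (D : ℝ) ^ (1 + ε) * z ^ ((1 : ℝ) / 2)) := by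
  obtain ⟨C₀, hC₀, hτ⟩ := exists_card_divisors_le_mul_rpow (half_pos hε)
  refine ⟨7 * C₀ + 15, by positivity, fun α a q D z hq hcop hb hD hqD hz _ => ?_⟩
  have hD' : (0 : ℝ) < D := by exact_mod_cast hD
  have hlin : (#(nearIntegerSquares α D z) : ℝ) ≤ (D ^ 2 / q + 1) * (2 * q * z + 3) := by
    refine (Nat.cast_le.2 (card_nearIntegerSquares_le α D z)).trans ?_
    exact_mod_cast card_nearIntegerMultiples_le hq hcop hb.le hz.le (D ^ 2)
  have hM : (#(nearIntegerMultiples α (D ^ 2) (2 * z)) : ℝ)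
      ≤ (D ^ 2 / q + 1) * (4 * q * z + 3) :=
    (card_nearIntegerMultiples_le hq hcop hb.le (by positivity) (D ^ 2)).trans_eq
      (by push_cast; ring)
  have hquad := card_nearIntegerSquares_mul_self_le (α := α) (z := z) hε.le hτ D
  change (#(nearIntegerSquares α D z) : ℝ) ≤ _
  rw [Real.rpow_add hD', Real.rpow_one, ← Real.sqrt_eq_rpow]
  exact le_of_linear_and_quadratic_bounds (by positivity) hD'.le hqD hz.le hC₀
    (Real.one_le_rpow (by exact_mod_cast hD) hε.le) hlin (hquad.trans (by gcongr))
end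

section
/- Let α be real, a, q integers with q ≥ 1, gcd(a, q) = 1 and |α − a/q| ≤ q⁻². Let D be a positive integer with D ≤ q^{1/2}/4. Then Σ_{D ≤ d < 2D} ‖αd²‖⁻¹ ≪ q log q. -/
open Finset Real

theorem nid_sub_abs_sub_le (x y : ℝ) : nid y - |x - y| ≤ nid x := by
  have h₁ : nid y ≤ |y - round x| := round_le y (round x)
  have h₂ : |y - round x| ≤ |y - x| + |x - round x| := abs_sub_le y x (round x)
  rw [abs_sub_comm y x] at h₂
  simp only [nid] at h₁ ⊢
  linarith

theorem nid_intCast_div (m : ℤ) (q : ℕ) [NeZero q] :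
    nid (m / q) = min ((m : ZMod q).val : ℝ) (q - (m : ZMod q).val) / q := by
  have hq : (0 : ℝ) < q := by exact_mod_cast Nat.pos_of_neZero q
  have hval : (((m : ZMod q).val : ℤ) : ℝ) = ((m % q : ℤ) : ℝ) := by rw [ZMod.val_intCast]
  push_cast at hval
  rw [nid, abs_sub_round_eq_min, Int.fract_div_intCast_eq_div_intCast_mod, ← hval,
    ← min_div_div_right hq.le, sub_div, div_self hq.ne']

theorem inv_min_le_inv_add_inv {a b : ℝ} (ha : 0 ≤ a) (hb : 0 ≤ b) :
    (min a b)⁻¹ ≤ a⁻¹ + b⁻¹ := by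
  rcases min_choice a b with h | h <;> rw [h]
  · exact le_add_of_nonneg_right (inv_nonneg.2 hb)
  · exact le_add_of_nonneg_left (inv_nonneg.2 ha)

theorem inv_nid_le_of_abs_sub_le {x : ℝ} {m : ℤ} {q : ℕ} [NeZero q] (hm : (m : ZMod q) ≠ 0)
    (hx : |x - m / q| ≤ 1 / (4 * q)) :
    (nid x)⁻¹ ≤ 2 * q * (((m : ZMod q).val : ℝ)⁻¹ + ((q : ℝ) - (m : ZMod q).val)⁻¹) := by
  set v := (m : ZMod q).val
  have hq : (0 : ℝ) < q := by exact_mod_cast Nat.pos_of_neZero q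
  have hv : (1 : ℝ) ≤ v := by
    exact_mod_cast Nat.one_le_iff_ne_zero.2 ((ZMod.val_ne_zero _).2 hm)
  have hvq : (v : ℝ) + 1 ≤ q := by exact_mod_cast ZMod.val_lt (m : ZMod q)
  set M := min (v : ℝ) (q - v)
  have hM : 1 ≤ M := le_min hv (by linarith)
  -- `nid` is 1-Lipschitz, and `M / q ≥ 1 / q` absorbs the error `1 / (4 q)`.
  have hnid : M / (2 * q) ≤ nid x := by
    have h : M / q - |x - m / q| ≤ nid x := by
      simpa only [nid_intCast_div] using nid_sub_abs_sub_le x (m / q)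
    have : M / q - 1 / (4 * q) - M / (2 * q) = (2 * M - 1) / (4 * q) := by
      field_simp
      ring
    have : 0 ≤ (2 * M - 1) / (4 * q) := div_nonneg (by linarith) (by positivity)
    linarith
  calc (nid x)⁻¹ ≤ (M / (2 * q))⁻¹ := inv_anti₀ (by positivity) hnid
    _ = 2 * q * M⁻¹ := by rw [inv_div, div_eq_mul_inv]
    _ ≤ 2 * q * ((v : ℝ)⁻¹ + ((q : ℝ) - v)⁻¹) := by
      gcongr
      exact inv_min_le_inv_add_inv (by positivity) (by linarith)

theorem sum_Ico_inv_add_inv_sub_le (q : ℕ) :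
    ∑ v ∈ Ico 1 q, ((v : ℝ)⁻¹ + ((q : ℝ) - v)⁻¹) ≤ 2 * (1 + Real.log q) := by
  have hreflect : ∑ v ∈ Ico 1 q, ((q : ℝ) - v)⁻¹ = ∑ v ∈ Ico 1 q, (v : ℝ)⁻¹ := by
    refine sum_nbij' (fun v => q - v) (fun v => q - v) ?_ ?_ ?_ ?_ ?_ <;>
      intro v hv <;> simp only [mem_Ico] at hv ⊢
    · omega
    · omega
    · omega
    · omega
    · rw [Nat.cast_sub hv.2.le]
  have hharmonic : ∑ v ∈ Ico 1 q, (v : ℝ)⁻¹ ≤ 1 + Real.log q := by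
    rcases Nat.eq_zero_or_pos q with rfl | hq
    · simp
    have hIco : Ico 1 q = Icc 1 (q - 1) := by
      rw [← Ico_add_one_right_eq_Icc]
      congr 1
      omega
    have hlog : Real.log ((q - 1 : ℕ) : ℝ) ≤ Real.log q := by
      rcases Nat.eq_zero_or_pos (q - 1) with h | h
      · rw [h, Nat.cast_zero, Real.log_zero]
        exact Real.log_natCast_nonneg q
      · exact Real.log_le_log (by exact_mod_cast h) (by exact_mod_cast Nat.sub_le q 1)
    calc ∑ v ∈ Ico 1 q, (v : ℝ)⁻¹ = harmonic (q - 1) := by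
          rw [harmonic_eq_sum_Icc, hIco]; push_cast; rfl
      _ ≤ 1 + Real.log ((q - 1 : ℕ) : ℝ) := harmonic_le_one_add_log _
      _ ≤ 1 + Real.log q := by linarith
  rw [sum_add_distrib, hreflect]
  linarith

theorem sum_inv_add_inv_sub_le_of_injOn {ι : Type*} {s : Finset ι} {r : ι → ℕ} {q : ℕ}
    (hr : Set.InjOn r s) (hmem : ∀ i ∈ s, r i ∈ Ico 1 q) :
    ∑ i ∈ s, ((r i : ℝ)⁻¹ + ((q : ℝ) - r i)⁻¹) ≤ 2 * (1 + Real.log q) := by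
  rw [← sum_image (f := fun v : ℕ => (v : ℝ)⁻¹ + ((q : ℝ) - v)⁻¹) hr]
  refine (sum_le_sum_of_subset_of_nonneg (image_subset_iff.2 hmem) fun v hv _ => ?_).trans
    (sum_Ico_inv_add_inv_sub_le q)
  have : (v : ℝ) < q := by exact_mod_cast (mem_Ico.1 hv).2
  have : (0 : ℝ) ≤ q - v := by linarith
  positivity

theorem ZMod.injOn_val_mul_sq {q : ℕ} [NeZero q] {u : ZMod q} (hu : IsUnit u) :
    Set.InjOn (fun d : ℕ => (u * (d : ZMod q) ^ 2).val) {d | d ^ 2 < q} := by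
  intro d hd e he h
  have h : ((d ^ 2 : ℕ) : ZMod q) = ((e ^ 2 : ℕ) : ZMod q) := by
    push_cast
    exact hu.mul_right_inj.1 (ZMod.val_injective q h)
  rw [ZMod.natCast_eq_natCast_iff', Nat.mod_eq_of_lt hd, Nat.mod_eq_of_lt he] at h
  exact Nat.pow_left_injective two_ne_zero h

theorem ZMod.mul_sq_ne_zero {q d : ℕ} {u : ZMod q} (hu : IsUnit u) (hd : 0 < d)
    (hdq : d ^ 2 < q) :
    u * (d : ZMod q) ^ 2 ≠ 0 := by
  rw [Ne, hu.mul_right_eq_zero, ← Nat.cast_pow, ZMod.natCast_eq_zero_iff]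
  exact fun h => (Nat.le_of_dvd (by positivity) h).not_gt hdq

theorem sq_lt_of_sq_lt_div_four {d q : ℕ} (h : (d : ℝ) ^ 2 < q / 4) : d ^ 2 < q := by
  have : ((d ^ 2 : ℕ) : ℝ) < q := by push_cast; linarith [(Nat.cast_nonneg (α := ℝ) q)]
  exact_mod_cast this

theorem inv_nid_mul_sq_le {α : ℝ} {a : ℤ} {q d : ℕ} [NeZero q] (hu : IsUnit (a : ZMod q))
    (hα : |α - a / q| ≤ (q : ℝ)⁻¹ ^ 2) (hd : 0 < d) (hdq : (d : ℝ) ^ 2 < q / 4) :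
    (nid (α * d ^ 2))⁻¹ ≤
      2 * q * ((((a : ZMod q) * (d : ZMod q) ^ 2).val : ℝ)⁻¹ +
        ((q : ℝ) - ((a : ZMod q) * (d : ZMod q) ^ 2).val)⁻¹) := by
  have hq : (0 : ℝ) < q := by exact_mod_cast Nat.pos_of_neZero q
  have hdqN : d ^ 2 < q := sq_lt_of_sq_lt_div_four hdq
  have hcast : ((a * (d : ℤ) ^ 2 : ℤ) : ZMod q) = (a : ZMod q) * (d : ZMod q) ^ 2 := by
    push_cast; rfl
  rw [← hcast]
  refine inv_nid_le_of_abs_sub_le (hcast ▸ ZMod.mul_sq_ne_zero hu hd hdqN) ?_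
  calc |α * d ^ 2 - ((a * (d : ℤ) ^ 2 : ℤ) : ℝ) / q| = |(d : ℝ) ^ 2 * (α - a / q)| := by
        push_cast
        ring_nf
    _ = (d : ℝ) ^ 2 * |α - a / q| := by rw [abs_mul, abs_of_nonneg (sq_nonneg _)]
    _ ≤ q / 4 * (q : ℝ)⁻¹ ^ 2 := mul_le_mul hdq.le hα (abs_nonneg _) (by positivity)
    _ = 1 / (4 * q) := by field_simp

theorem sq_lt_div_four_of_mem_Ico {D d q : ℕ} (hDq : (D : ℝ) ≤ √q / 4)
    (hd : d ∈ Ico D (2 * D)) :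
    (d : ℝ) ^ 2 < q / 4 := by
  have hd2D : (d : ℝ) < 2 * D := by exact_mod_cast (mem_Ico.1 hd).2
  have hsq : (√q : ℝ) ^ 2 = q := Real.sq_sqrt (Nat.cast_nonneg q)
  nlinarith [Nat.cast_nonneg (α := ℝ) d]

theorem one_le_log_of_le_sqrt_div_four {D q : ℕ} (hD : 1 ≤ D) (hDq : (D : ℝ) ≤ √q / 4) :
    1 ≤ Real.log q := by
  have hD' : (1 : ℝ) ≤ D := by exact_mod_cast hD
  have hq : (16 : ℝ) ≤ q := by
    nlinarith [Real.sq_sqrt (Nat.cast_nonneg (α := ℝ) q), Real.sqrt_nonneg (q : ℝ)]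
  rw [Real.le_log_iff_exp_le (by linarith)]
  linarith [Real.exp_one_lt_d9]

theorem stmt6 :
    ∃ C : ℝ, 0 < C ∧ ∀ (α : ℝ) (a : ℤ) (q D : ℕ),
      1 ≤ q → Int.gcd a q = 1 → |α - (a : ℝ) / q| ≤ ((q : ℝ))⁻¹ ^ 2 →
      1 ≤ D → (D : ℝ) ≤ Real.sqrt q / 4 →
      ∑ d ∈ Finset.Ico D (2 * D), (nid (α * (d : ℝ) ^ 2))⁻¹
        ≤ C * q * Real.log q := by
  refine ⟨8, by norm_num, fun α a q D hq hgcd hα hD hDq => ?_⟩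
  have : NeZero q := ⟨by omega⟩
  have hu : IsUnit (a : ZMod q) := (ZMod.coe_int_isUnit_iff_isCoprime a q).2
    (Int.isCoprime_iff_gcd_eq_one.2 (by rwa [Int.gcd_comm]))
  have hpos : ∀ d ∈ Ico D (2 * D), 0 < d := fun d hd => by linarith [(mem_Ico.1 hd).1]
  have hsq : ∀ d ∈ Ico D (2 * D), d ^ 2 < q := fun d hd =>
    sq_lt_of_sq_lt_div_four (sq_lt_div_four_of_mem_Ico hDq hd)
  have hlog : 1 ≤ Real.log q := one_le_log_of_le_sqrt_div_four hD hDq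
  set r : ℕ → ℕ := fun d => ((a : ZMod q) * (d : ZMod q) ^ 2).val
  have hr : Set.InjOn r (Ico D (2 * D)) := fun d hd e he =>
    ZMod.injOn_val_mul_sq hu (hsq d hd) (hsq e he)
  have hmem : ∀ d ∈ Ico D (2 * D), r d ∈ Ico 1 q := fun d hd => mem_Ico.2
    ⟨Nat.one_le_iff_ne_zero.2 <| (ZMod.val_ne_zero _).2 <|
      ZMod.mul_sq_ne_zero hu (hpos d hd) (hsq d hd), ZMod.val_lt _⟩
  calc ∑ d ∈ Ico D (2 * D), (nid (α * (d : ℝ) ^ 2))⁻¹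
      ≤ ∑ d ∈ Ico D (2 * D), 2 * q * ((r d : ℝ)⁻¹ + ((q : ℝ) - r d)⁻¹) :=
        sum_le_sum fun d hd =>
          inv_nid_mul_sq_le hu hα (hpos d hd) (sq_lt_div_four_of_mem_Ico hDq hd)
    _ ≤ 2 * q * (2 * (1 + Real.log q)) := by
      rw [← mul_sum]
      gcongr
      exact sum_inv_add_inv_sub_le_of_injOn hr hmem
    _ ≤ 8 * q * Real.log q := by nlinarith
end

section
/- Let q ≥ 2 and a be an integer with gcd(a, q) = 1, and let D be a positive integer with 2D ≤ q^{1/2}/2. Then Σ_{D ≤ d < 2D} ‖ad²/q‖⁻¹ ≪ q log q, where ‖·‖ denotes distance to the nearest integer. -/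
open Finset Real

theorem nid_add_intCast (x : ℝ) (n : ℤ) : nid (x + n) = nid x := by
  simp only [nid, round_add_intCast, Int.cast_add, add_sub_add_right_eq_sub]

theorem nid_intCast_div_of_modEq {m : ℤ} {q r : ℕ} (h : m ≡ r [ZMOD q]) :
    nid (m / q) = (min (r % q) (q - r % q) : ℕ) / q := by
  rcases Nat.eq_zero_or_pos q with rfl | hq
  · simp [nid]
  obtain ⟨k, hk⟩ := h.symm.dvd
  have hm : (m : ℝ) / q = (r : ℝ) / q + k := by
    rw [show m = r + q * k by linarith]
    push_cast
    field_simp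
  rw [hm, nid_add_intCast, nid, abs_sub_round_div_natCast_eq]

theorem inv_nid_intCast_div_le {m : ℤ} {q r : ℕ} (h : m ≡ r [ZMOD q]) (hr : 0 < r)
    (hrq : r < q) : (nid (m / q))⁻¹ ≤ q / r + q / (q - r : ℕ) := by
  rw [nid_intCast_div_of_modEq h, Nat.mod_eq_of_lt hrq, inv_div]
  rcases min_choice r (q - r) with hmin | hmin <;> rw [hmin]
  · exact le_add_of_nonneg_right (by positivity)
  · exact le_add_of_nonneg_left (by positivity)

theorem sum_Ico_div_add_div_sub_eq (q : ℕ) :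
    ∑ r ∈ Ico 1 q, ((q : ℝ) / r + q / (q - r : ℕ)) = 2 * q * harmonic (q - 1) := by
  have hreflect : ∑ r ∈ Ico 1 q, (q : ℝ) / (q - r : ℕ) = ∑ r ∈ Ico 1 q, (q : ℝ) / r := by
    rw [sum_Ico_reflect (fun r => (q : ℝ) / r) 1 (Nat.le_succ q)]
    simp
  have hharmonic : ∑ r ∈ Ico 1 q, (q : ℝ) / r = q * harmonic (q - 1) := by
    have hIco : Ico 1 q = Icc 1 (q - 1) := by ext; simp only [mem_Ico, mem_Icc]; omega
    rw [harmonic_eq_sum_Icc, hIco]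
    push_cast
    rw [mul_sum]
    rfl
  rw [sum_add_distrib, hreflect, hharmonic]
  ring

theorem sum_inv_nid_intCast_div_le {ι : Type*} (s : Finset ι) (f : ι → ℤ) {q : ℕ} (hq : 0 < q)
    (hf : ∀ i ∈ s, ¬ (q : ℤ) ∣ f i) (hinj : ∀ i ∈ s, ∀ j ∈ s, f i ≡ f j [ZMOD q] → i = j) :
    ∑ i ∈ s, (nid (f i / q))⁻¹ ≤ 2 * q * harmonic (q - 1) := by
  set r : ι → ℕ := fun i => (f i % q).toNat
  have hqZ : (0 : ℤ) < q := by exact_mod_cast hq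
  have hr : ∀ i, (r i : ℤ) = f i % q := fun i => Int.toNat_of_nonneg (Int.emod_nonneg _ hqZ.ne')
  have hmodEq : ∀ i, f i ≡ r i [ZMOD q] := fun i => by rw [hr]; exact (Int.mod_modEq _ _).symm
  have hmem : ∀ i ∈ s, r i ∈ Ico 1 q := fun i hi => by
    have := Int.emod_lt_of_pos (f i) hqZ
    have := mt Int.dvd_of_emod_eq_zero (hf i hi)
    have := hr i
    rw [mem_Ico]
    omega
  have hrinj : Set.InjOn r s := fun i hi j hj hij =>
    hinj i hi j hj ((hmodEq i).trans (hij ▸ (hmodEq j).symm))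
  calc ∑ i ∈ s, (nid (f i / q))⁻¹
      ≤ ∑ i ∈ s, ((q : ℝ) / r i + q / (q - r i : ℕ)) := sum_le_sum fun i hi =>
        inv_nid_intCast_div_le (hmodEq i) (mem_Ico.1 (hmem i hi)).1 (mem_Ico.1 (hmem i hi)).2
    _ = ∑ x ∈ s.image r, ((q : ℝ) / x + q / (q - x : ℕ)) :=
        (sum_image (f := fun x => (q : ℝ) / x + q / (q - x : ℕ)) hrinj).symm
    _ ≤ ∑ x ∈ Ico 1 q, ((q : ℝ) / x + q / (q - x : ℕ)) :=
        sum_le_sum_of_subset_of_nonneg (image_subset_iff.2 hmem) fun _ _ _ => by positivity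
    _ = 2 * q * harmonic (q - 1) := sum_Ico_div_add_div_sub_eq q

theorem eq_of_mul_sq_modEq {a : ℤ} {q d₁ d₂ : ℕ} (ha : Int.gcd a q = 1) (h₁ : d₁ ^ 2 < q)
    (h₂ : d₂ ^ 2 < q) (h : a * d₁ ^ 2 ≡ a * d₂ ^ 2 [ZMOD q]) : d₁ = d₂ := by
  have hsq := Int.ModEq.cancel_left_div_gcd (by omega) h
  rw [Int.gcd_comm, ha, Nat.cast_one, Int.ediv_one] at hsq
  exact Nat.pow_left_injective two_ne_zero <|
    (Int.natCast_modEq_iff.1 (by exact_mod_cast hsq)).eq_of_lt_of_lt h₁ h₂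

theorem harmonic_pred_le_three_mul_log {q : ℕ} (hq : 2 ≤ q) :
    (harmonic (q - 1) : ℝ) ≤ 3 * log q := by
  have hlog2 : 1 / 2 < log 2 := by linarith [log_two_gt_d9]
  have hlogq : log 2 ≤ log q := log_le_log two_pos (by exact_mod_cast hq)
  have hlogpred : log (q - 1 : ℕ) ≤ log q :=
    log_le_log (by norm_cast; omega) (by norm_cast; omega)
  linarith [harmonic_le_one_add_log (q - 1)]

theorem stmt15 :
    ∃ C : ℝ, 0 < C ∧ ∀ (a : ℤ) (q D : ℕ),
      2 ≤ q → Int.gcd a q = 1 → 1 ≤ D → (2 * D : ℝ) ≤ Real.sqrt q / 2 →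
      ∑ d ∈ Finset.Ico D (2 * D), (nid ((a : ℝ) * (d : ℝ) ^ 2 / q))⁻¹
        ≤ C * q * Real.log q := by
  refine ⟨6, by norm_num, fun a q D hq ha _ hDq => ?_⟩
  have hsq : ∀ d ∈ Ico D (2 * D), d ^ 2 < q := fun d hd => by
    have hd2D : (d : ℝ) < 2 * D := by exact_mod_cast (mem_Ico.1 hd).2
    have hd : (d : ℝ) < √q := by linarith [sqrt_nonneg (q : ℝ)]
    exact_mod_cast (lt_sqrt (Nat.cast_nonneg d)).1 hd
  have hf : ∀ d ∈ Ico D (2 * D), ¬ (q : ℤ) ∣ a * (d : ℤ) ^ 2 := fun d hd hdvd => by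
    have hd0 := eq_of_mul_sq_modEq (d₂ := 0) ha (hsq d hd) (by omega)
      (by simpa using Int.modEq_zero_iff_dvd.2 hdvd)
    have := mem_Ico.1 hd
    omega
  calc ∑ d ∈ Ico D (2 * D), (nid ((a : ℝ) * (d : ℝ) ^ 2 / q))⁻¹
      = ∑ d ∈ Ico D (2 * D), (nid ((a * d ^ 2 : ℤ) / q))⁻¹ := by push_cast; rfl
    _ ≤ 2 * q * harmonic (q - 1) := sum_inv_nid_intCast_div_le _ _ (by omega) hf
        fun d₁ h₁ d₂ h₂ => eq_of_mul_sq_modEq ha (hsq d₁ h₁) (hsq d₂ h₂)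
    _ ≤ 2 * q * (3 * log q) := by gcongr; exact harmonic_pred_le_three_mul_log hq
    _ = 6 * q * log q := by ring
end
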